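/- arXiv:2501.18853 — 2 statements merged into one kernel-verified Lean document; each statement's English description precedes it below -/
import Mathlib

section
/- Let ℋ and Ĥ be matrices of the same size with rank(ℋ) ≤ n, and let Ĥ_n be a best rank-n approximation of Ĥ in spectral norm (a truncated SVD keeping the n largest singular values). Then ‖ℋ − Ĥ_n‖_F ≤ 2·√(2n)·‖ℋ − Ĥ‖, where ‖·‖_F is the Frobenius norm and ‖·‖ the spectral norm. -/
open Matrix Module
open scoped RealInnerProductSpace

-- Parseval transfer: Frobenius-type sum equals the same sum for the adjoint
lemma sum_norm_sq_map_eq_adjoint {E F : Type*} [NormedAddCommGroup E] [InnerProductSpace ℝ E]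
    [NormedAddCommGroup F] [InnerProductSpace ℝ F] [FiniteDimensional ℝ E] [FiniteDimensional ℝ F]
    {ι κ : Type*} [Fintype ι] [Fintype κ]
    (b : OrthonormalBasis ι ℝ E) (c : OrthonormalBasis κ ℝ F) (f : E →L[ℝ] F) :
    ∑ j, ‖f (b j)‖ ^ 2 = ∑ i, ‖ContinuousLinearMap.adjoint f (c i)‖ ^ 2 := by
  have key : ∀ j i, ⟪f (b j), c i⟫ * ⟪c i, f (b j)⟫
      = ⟪ContinuousLinearMap.adjoint f (c i), b j⟫ * ⟪b j, ContinuousLinearMap.adjoint f (c i)⟫ := by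
    intro j i
    rw [real_inner_comm (f (b j)) (c i),
      real_inner_comm ((ContinuousLinearMap.adjoint f) (c i)) (b j),
      ContinuousLinearMap.adjoint_inner_left, real_inner_comm (c i) (f (b j))]
  calc ∑ j, ‖f (b j)‖ ^ 2 = ∑ j, ∑ i, ⟪f (b j), c i⟫ * ⟪c i, f (b j)⟫ := by
        refine Finset.sum_congr rfl fun j _ => ?_
        rw [c.sum_inner_mul_inner, real_inner_self_eq_norm_sq]
    _ = ∑ i, ∑ j, ⟪ContinuousLinearMap.adjoint f (c i), b j⟫ * ⟪b j, ContinuousLinearMap.adjoint f (c i)⟫ := by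
        rw [Finset.sum_comm]
        exact Finset.sum_congr rfl fun i _ => Finset.sum_congr rfl fun j _ => key j i
    _ = ∑ i, ‖ContinuousLinearMap.adjoint f (c i)‖ ^ 2 := by
        refine Finset.sum_congr rfl fun i _ => ?_
        rw [b.sum_inner_mul_inner, real_inner_self_eq_norm_sq]

lemma sum_norm_sq_le_rank {E F : Type*} [NormedAddCommGroup E] [InnerProductSpace ℝ E]
    [NormedAddCommGroup F] [InnerProductSpace ℝ F] [FiniteDimensional ℝ E] [FiniteDimensional ℝ F]
    {ι : Type*} [Fintype ι]
    (b : OrthonormalBasis ι ℝ E) (f : E →L[ℝ] F) :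
    ∑ j, ‖f (b j)‖ ^ 2 ≤ (finrank ℝ (LinearMap.range (f : E →ₗ[ℝ] F)) : ℝ) * ‖f‖ ^ 2 := by
  set K : Submodule ℝ E := LinearMap.ker (f : E →ₗ[ℝ] F) with hK
  set W : Submodule ℝ E := Kᗮ with hW
  set g : W →L[ℝ] F := f.comp W.subtypeL with hg
  have hgapp : ∀ v : W, g v = f (v : E) := fun v => rfl
  have c := stdOrthonormalBasis ℝ F
  have b' := stdOrthonormalBasis ℝ W
  -- adjoint of g is adjoint of f, corestricted to W
  have hmem : ∀ y : F, ContinuousLinearMap.adjoint f y ∈ W := by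
    intro y
    rw [hW, Submodule.mem_orthogonal]
    intro u hu
    rw [real_inner_comm, ContinuousLinearMap.adjoint_inner_left]
    have : f u = 0 := hu
    rw [this, inner_zero_right]
  have hadj : ∀ y : F, ContinuousLinearMap.adjoint g y
      = (⟨ContinuousLinearMap.adjoint f y, hmem y⟩ : W) := by
    intro y
    apply ext_inner_right ℝ
    intro v
    rw [ContinuousLinearMap.adjoint_inner_left]
    rw [Submodule.coe_inner, ContinuousLinearMap.adjoint_inner_left]
    rfl
  have hnorm : ∀ y : F, ‖ContinuousLinearMap.adjoint g y‖ = ‖ContinuousLinearMap.adjoint f y‖ := by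
    intro y
    rw [hadj y]
    rfl
  have h1 := sum_norm_sq_map_eq_adjoint b c f
  have h2 := sum_norm_sq_map_eq_adjoint b' c g
  have hfr : finrank ℝ W = finrank ℝ (LinearMap.range (f : E →ₗ[ℝ] F)) := by
    have h3 : finrank ℝ K + finrank ℝ W = finrank ℝ E := K.finrank_add_finrank_orthogonal
    have h4 : finrank ℝ (LinearMap.range (f : E →ₗ[ℝ] F)) + finrank ℝ K = finrank ℝ E :=
      LinearMap.finrank_range_add_finrank_ker (f : E →ₗ[ℝ] F)
    omega
  calc ∑ j, ‖f (b j)‖ ^ 2 = ∑ i, ‖ContinuousLinearMap.adjoint f (c i)‖ ^ 2 := h1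
    _ = ∑ i, ‖ContinuousLinearMap.adjoint g (c i)‖ ^ 2 := by
        exact Finset.sum_congr rfl fun i _ => by rw [hnorm]
    _ = ∑ j, ‖g (b' j)‖ ^ 2 := h2.symm
    _ ≤ ∑ _j : Fin (finrank ℝ W), ‖f‖ ^ 2 := by
        refine Finset.sum_le_sum fun j _ => ?_
        have : ‖g (b' j)‖ ≤ ‖f‖ := by
          rw [hgapp]
          have h5 := f.le_opNorm ((b' j : W) : E)
          have h6 : ‖((b' j : W) : E)‖ = 1 := by
            rw [show ‖((b' j : W) : E)‖ = ‖b' j‖ from rfl, b'.orthonormal.1 j]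
          rw [h6, mul_one] at h5
          exact h5
        exact pow_le_pow_left₀ (norm_nonneg _) this 2
    _ = (finrank ℝ (LinearMap.range (f : E →ₗ[ℝ] F)) : ℝ) * ‖f‖ ^ 2 := by
        rw [Finset.sum_const, Finset.card_univ, Fintype.card_fin, hfr, nsmul_eq_mul]

/-- Spectral norm (largest singular value) of a real matrix. -/
noncomputable def specNorm {α β : Type*} [Fintype α] [Fintype β] [DecidableEq β]
    (M : Matrix α β ℝ) : ℝ :=
  ‖LinearMap.toContinuousLinearMap (Matrix.toEuclideanLin M)‖

/-- Frobenius norm of a real matrix. -/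
noncomputable def frobNorm {α β : Type*} [Fintype α] [Fintype β] (M : Matrix α β ℝ) : ℝ :=
  Real.sqrt (∑ i : α, ∑ j : β, (M i j) ^ 2)

lemma rank_toEuclideanLin {α β : Type*} [Fintype α] [Fintype β] [DecidableEq β]
    (M : Matrix α β ℝ) :
    finrank ℝ (LinearMap.range (Matrix.toEuclideanLin M)) = M.rank := by
  have h : LinearMap.range (Matrix.toEuclideanLin M) =
      Submodule.map
        (((WithLp.linearEquiv 2 ℝ (α → ℝ)).symm : (α → ℝ) ≃ₗ[ℝ] EuclideanSpace ℝ α) :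
          (α → ℝ) →ₗ[ℝ] EuclideanSpace ℝ α)
        (LinearMap.range M.mulVecLin) := by
    ext x
    constructor
    · rintro ⟨v, rfl⟩
      exact ⟨M.mulVecLin (WithLp.equiv 2 (β → ℝ) v), ⟨_, rfl⟩, rfl⟩
    · rintro ⟨y, ⟨w, rfl⟩, rfl⟩
      exact ⟨(WithLp.equiv 2 (β → ℝ)).symm w, rfl⟩
  rw [h, LinearEquiv.finrank_map_eq]
  rfl

lemma specNorm_nonneg {α β : Type*} [Fintype α] [Fintype β] [DecidableEq β]
    (M : Matrix α β ℝ) : 0 ≤ specNorm M := norm_nonneg _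

lemma specNorm_add_le {α β : Type*} [Fintype α] [Fintype β] [DecidableEq β]
    (A B : Matrix α β ℝ) : specNorm (A + B) ≤ specNorm A + specNorm B := by
  unfold specNorm
  rw [map_add, map_add]
  exact norm_add_le _ _

lemma specNorm_neg {α β : Type*} [Fintype α] [Fintype β] [DecidableEq β]
    (A : Matrix α β ℝ) : specNorm (-A) = specNorm A := by
  unfold specNorm
  rw [map_neg, map_neg, norm_neg]

lemma matrix_rank_add_le {α β : Type*} [Fintype α] [Fintype β]
    (A B : Matrix α β ℝ) : (A + B).rank ≤ A.rank + B.rank := by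
  unfold Matrix.rank
  have h1 : LinearMap.range (A + B).mulVecLin ≤
      LinearMap.range A.mulVecLin ⊔ LinearMap.range B.mulVecLin := by
    rintro x ⟨v, rfl⟩
    rw [Matrix.mulVecLin_add]
    exact Submodule.add_mem _
      (Submodule.mem_sup_left ⟨v, rfl⟩) (Submodule.mem_sup_right ⟨v, rfl⟩)
  exact (Submodule.finrank_mono h1).trans
    (Submodule.finrank_add_le_finrank_add_finrank _ _)

lemma matrix_rank_neg {α β : Type*} [Fintype α] [Fintype β]
    (A : Matrix α β ℝ) : (-A).rank = A.rank := by
  unfold Matrix.rank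
  have h : (-A).mulVecLin = -A.mulVecLin := by
    apply LinearMap.ext
    intro v
    simp [Matrix.mulVecLin_apply, Matrix.neg_mulVec]
  rw [h, LinearMap.range_neg]

lemma frob_le_sqrt_rank_mul_spec {α β : Type*} [Fintype α] [Fintype β] [DecidableEq β]
    (M : Matrix α β ℝ) :
    frobNorm M ≤ Real.sqrt M.rank * specNorm M := by
  classical
  set f : EuclideanSpace ℝ β →L[ℝ] EuclideanSpace ℝ α :=
    LinearMap.toContinuousLinearMap (Matrix.toEuclideanLin M) with hf
  have hfcoe : (f : EuclideanSpace ℝ β →ₗ[ℝ] EuclideanSpace ℝ α) = Matrix.toEuclideanLin M :=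
    LinearMap.coe_toContinuousLinearMap _
  set b := EuclideanSpace.basisFun β ℝ with hb
  have happ : ∀ j, ‖f (b j)‖ ^ 2 = ∑ i, (M i j) ^ 2 := by
    intro j
    have h1 : ∀ i, f (b j) i = M i j := by
      intro i
      show (Matrix.toEuclideanLin M) (b j) i = M i j
      rw [EuclideanSpace.basisFun_apply]
      show (M *ᵥ (WithLp.equiv 2 (β → ℝ)) (EuclideanSpace.single j 1)) i = M i j
      have : (WithLp.equiv 2 (β → ℝ)) (EuclideanSpace.single j 1) = Pi.single j 1 := rfl
      rw [this, Matrix.mulVec_single]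
      exact mul_one _
    rw [EuclideanSpace.norm_eq, Real.sq_sqrt (by positivity)]
    refine Finset.sum_congr rfl fun i _ => ?_
    rw [h1 i, Real.norm_eq_abs, sq_abs]
  have hfrob : frobNorm M = Real.sqrt (∑ j, ‖f (b j)‖ ^ 2) := by
    unfold frobNorm
    rw [Finset.sum_comm]
    congr 1
    exact Finset.sum_congr rfl fun j _ => (happ j).symm
  have hkey : ∑ j, ‖f (b j)‖ ^ 2 ≤ (M.rank : ℝ) * ‖f‖ ^ 2 := by
    have := sum_norm_sq_le_rank b f
    rwa [hfcoe, rank_toEuclideanLin] at this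
  rw [hfrob]
  calc Real.sqrt (∑ j, ‖f (b j)‖ ^ 2) ≤ Real.sqrt ((M.rank : ℝ) * ‖f‖ ^ 2) :=
        Real.sqrt_le_sqrt hkey
    _ = Real.sqrt M.rank * ‖f‖ := by
        rw [Real.sqrt_mul (by positivity), Real.sqrt_sq (norm_nonneg _)]
    _ = Real.sqrt M.rank * specNorm M := rfl

/-- If `rank ℋ ≤ n` and `Ĥ_n` is a best rank-`n` approximation of `Ĥ` in spectral norm,
then `‖ℋ − Ĥ_n‖_F ≤ 2 √(2n) ‖ℋ − Ĥ‖`. -/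
theorem best_rank_approx_error_frobenius_le
    {α β : Type*} [Fintype α] [Fintype β] [DecidableEq β]
    (n : ℕ) (H Hhat Hn : Matrix α β ℝ)
    (hrankH : H.rank ≤ n)
    (hHn_rank : Hn.rank ≤ n)
    (hHn_best : ∀ B : Matrix α β ℝ, B.rank ≤ n →
      specNorm (Hhat - Hn) ≤ specNorm (Hhat - B)) :
    frobNorm (H - Hn) ≤ 2 * Real.sqrt (2 * n) * specNorm (H - Hhat) := by
  have hrank : (H - Hn).rank ≤ 2 * n := by
    have h1 : (H - Hn).rank ≤ H.rank + (-Hn).rank := by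
      rw [sub_eq_add_neg]; exact matrix_rank_add_le _ _
    rw [matrix_rank_neg] at h1
    omega
  have hspec : specNorm (H - Hn) ≤ 2 * specNorm (H - Hhat) := by
    have h2 : specNorm (H - Hn) ≤ specNorm (H - Hhat) + specNorm (Hhat - Hn) := by
      have : H - Hn = (H - Hhat) + (Hhat - Hn) := by abel
      rw [this]; exact specNorm_add_le _ _
    have h3 : specNorm (Hhat - Hn) ≤ specNorm (Hhat - H) := hHn_best H hrankH
    have h4 : specNorm (Hhat - H) = specNorm (H - Hhat) := by
      rw [show Hhat - H = -(H - Hhat) from (neg_sub _ _).symm, specNorm_neg]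
    linarith
  have h5 := frob_le_sqrt_rank_mul_spec (H - Hn)
  have h6 : Real.sqrt ((H - Hn).rank) ≤ Real.sqrt (2 * n) := by
    apply Real.sqrt_le_sqrt
    exact_mod_cast hrank
  calc frobNorm (H - Hn) ≤ Real.sqrt ((H - Hn).rank) * specNorm (H - Hn) := h5
    _ ≤ Real.sqrt (2 * n) * (2 * specNorm (H - Hhat)) := by
        apply mul_le_mul h6 hspec (specNorm_nonneg _) (Real.sqrt_nonneg _)
    _ = 2 * Real.sqrt (2 * n) * specNorm (H - Hhat) := by ring
end

section
/- Let 𝒜, ℬ ∈ ℂ^{n×n} be square complex matrices. Then the Hausdorff distance between their spectra satisfies d_H(𝒜, ℬ) ≤ ( ‖𝒜‖ + ‖ℬ‖ )^{1−1/n} · ‖𝒜 − ℬ‖^{1/n}, where ‖·‖ denotes the spectral norm. -/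
/-!
Elsner's argument. Let `μ` be an eigenvalue of `B` with unit eigenvector `x`. Then
`∏ᵢ |λᵢ - μ| = |det (μ - A)|`, and `|det R|` is the product of the singular values of `R`:
each is at most `‖R‖`, and the smallest is at most `‖R x‖`. For `R = μ - A` we have
`‖R‖ ≤ ‖A‖ + |μ| ≤ ‖A‖ + ‖B‖` and `R x = (B - A) x`, so the eigenvalue `λᵢ` of `A` nearest to `μ`
satisfies `|λᵢ - μ| ^ n ≤ (‖A‖ + ‖B‖) ^ (n - 1) ‖A - B‖`.
-/

open Matrix

/-- Spectral norm (largest singular value) of a complex matrix. -/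
noncomputable def specNormC {α β : Type*} [Fintype α] [Fintype β] [DecidableEq β]
    (M : Matrix α β ℂ) : ℝ :=
  ‖LinearMap.toContinuousLinearMap (Matrix.toEuclideanLin M)‖

/-- The spectrum of a complex square matrix, as the multiset of roots of its
characteristic polynomial (eigenvalues with multiplicity). -/
noncomputable def spectrumMultiset {n : ℕ} (M : Matrix (Fin n) (Fin n) ℂ) : Multiset ℂ :=
  M.charpoly.roots

/-- The spectrum variation of `B` with respect to `A`:
`sv_A(B) = max_j min_i |λ_i(A) − μ_j(B)|`. -/
noncomputable def specVariation {n : ℕ} (A B : Matrix (Fin n) (Fin n) ℂ) : ℝ :=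
  sSup {r : ℝ | ∃ μ ∈ spectrumMultiset B,
    r = sInf {s : ℝ | ∃ lam ∈ spectrumMultiset A, s = ‖lam - μ‖}}

/-- Hausdorff distance between the spectra of `A` and `B`. -/
noncomputable def hausdorffSpecDist {n : ℕ} (A B : Matrix (Fin n) (Fin n) ℂ) : ℝ :=
  max (specVariation A B) (specVariation B A)

open Module Polynomial

theorem Polynomial.norm_eval_eq_prod_roots {K : Type*} [NormedField K] [IsAlgClosed K] {p : K[X]}
    (hp : p.Monic) (z : K) : ‖p.eval z‖ = (p.roots.map fun a => ‖a - z‖).prod := by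
  conv_lhs => rw [(IsAlgClosed.splits p).eq_prod_roots_of_monic hp]
  rw [eval_multiset_prod, ← normHom_apply, map_multiset_prod, Multiset.map_map, Multiset.map_map]
  congr 1
  refine Multiset.map_congr rfl fun a _ => ?_
  simp [norm_sub_rev]

theorem Multiset.exists_mem_pow_card_le_prod_map {ι R : Type*} [CommMonoidWithZero R]
    [LinearOrder R] [ZeroLEOneClass R] [PosMulMono R] {s : Multiset ι} (hs : s ≠ 0) {f : ι → R}
    (hf : ∀ i ∈ s, 0 ≤ f i) : ∃ i ∈ s, f i ^ card s ≤ (s.map f).prod := by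
  classical
  obtain ⟨i, hi, hmin⟩ := s.toFinset.exists_min_image f (toFinset_nonempty.2 hs)
  rw [mem_toFinset] at hi
  refine ⟨i, hi, ?_⟩
  calc f i ^ card s = (s.map fun _ => f i).prod := by simp
    _ ≤ (s.map f).prod :=
      prod_map_le_prod_map₀ _ _ (fun _ _ => hf i hi) fun j hj => hmin j (mem_toFinset.2 hj)

theorem Real.le_rpow_mul_rpow_of_pow_le {r c d : ℝ} {n : ℕ} (hn : n ≠ 0) (hr : 0 ≤ r)
    (hc : 0 ≤ c) (hd : 0 ≤ d) (h : r ^ n ≤ c ^ (n - 1) * d) :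
    r ≤ c ^ (1 - 1 / (n : ℝ)) * d ^ (1 / (n : ℝ)) := by
  have hn' : (n : ℝ) ≠ 0 := Nat.cast_ne_zero.2 hn
  calc r = (r ^ n) ^ (1 / (n : ℝ)) := by rw [one_div, Real.pow_rpow_inv_natCast hr hn]
    _ ≤ (c ^ (n - 1) * d) ^ (1 / (n : ℝ)) := Real.rpow_le_rpow (by positivity) h (by positivity)
    _ = c ^ (1 - 1 / (n : ℝ)) * d ^ (1 / (n : ℝ)) := by
        rw [Real.mul_rpow (by positivity) hd, ← Real.rpow_natCast, ← Real.rpow_mul hc,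
          Nat.cast_pred (Nat.pos_of_ne_zero hn)]
        congr 2
        field_simp

namespace LinearMap

variable {𝕜 E F : Type*} [RCLike 𝕜]
  [NormedAddCommGroup E] [InnerProductSpace 𝕜 E] [FiniteDimensional 𝕜 E]
  [NormedAddCommGroup F] [InnerProductSpace 𝕜 F] [FiniteDimensional 𝕜 F]

theorem re_inner_adjoint_comp_self_apply (T : E →ₗ[𝕜] F) (x : E) :
    RCLike.re (inner 𝕜 ((adjoint T ∘ₗ T) x) x) = ‖T x‖ ^ 2 := by
  rw [comp_apply, adjoint_inner_left, inner_self_eq_norm_sq]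

theorem singularValues_finrank_sub_one_le (T : E →ₗ[𝕜] F) {x : E} (hx : ‖x‖ = 1) :
    T.singularValues (finrank 𝕜 E - 1) ≤ ‖T x‖ := by
  have hx0 : x ≠ 0 := by rintro rfl; simp at hx
  have : Nontrivial E := ⟨⟨x, 0, hx0⟩⟩
  have hS := T.isSymmetric_adjoint_comp_self
  -- The infimum of the Rayleigh quotient of `T† T` is an eigenvalue, i.e. a squared singular value.
  obtain ⟨i, hi⟩ := hS.exists_eigenvalues_eq rfl hS.hasEigenvalue_iInf_of_finiteDimensional
  have hmin : T.singularValues i ^ 2 ≤ ‖T x‖ ^ 2 := by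
    rw [sq_singularValues_fin T rfl, RCLike.ofReal_inj.1 hi]
    refine (ciInf_le ⟨0, ?_⟩ (⟨x, hx0⟩ : {y : E // y ≠ 0})).trans_eq ?_
    · rintro _ ⟨y, rfl⟩
      dsimp only
      rw [re_inner_adjoint_comp_self_apply]
      positivity
    · rw [re_inner_adjoint_comp_self_apply, hx, one_pow, div_one]
  calc T.singularValues (finrank 𝕜 E - 1) ≤ T.singularValues i :=
        T.singularValues_antitone (Nat.le_sub_one_of_lt i.isLt)
    _ ≤ ‖T x‖ :=
        (pow_le_pow_iff_left₀ (T.singularValues_nonneg _) (norm_nonneg _) two_ne_zero).1 hmin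

end LinearMap

namespace ContinuousLinearMap

section RCLike

variable {𝕜 E F : Type*} [RCLike 𝕜]
  [NormedAddCommGroup E] [InnerProductSpace 𝕜 E] [FiniteDimensional 𝕜 E]
  [NormedAddCommGroup F] [InnerProductSpace 𝕜 F] [FiniteDimensional 𝕜 F]

theorem singularValues_le_opNorm (T : E →L[𝕜] F) (i : ℕ) :
    (T : E →ₗ[𝕜] F).singularValues i ≤ ‖T‖ := by
  by_cases hi : i < finrank 𝕜 E
  · obtain ⟨v, hv, hv0⟩ :=
      (T : E →ₗ[𝕜] F).hasEigenvalue_adjoint_comp_self_sq_singularValues hi |>.exists_hasEigenvector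
    have hTv := (T : E →ₗ[𝕜] F).re_inner_adjoint_comp_self_apply v
    rw [End.mem_eigenspace_iff.1 hv, inner_smul_left, inner_self_eq_norm_sq_to_K] at hTv
    simp only [RCLike.conj_ofReal, ← RCLike.ofReal_pow, ← RCLike.ofReal_mul,
      RCLike.ofReal_re] at hTv
    have h : (T : E →ₗ[𝕜] F).singularValues i * ‖v‖ ≤ ‖T‖ * ‖v‖ := by
      refine (pow_le_pow_iff_left₀ (mul_nonneg (LinearMap.singularValues_nonneg _ i)
        (norm_nonneg v)) (by positivity) two_ne_zero).1 ?_
      rw [mul_pow, hTv]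
      exact pow_le_pow_left₀ (norm_nonneg _) (T.le_opNorm v) 2
    exact le_of_mul_le_mul_right h (norm_pos_iff.2 hv0)
  · rw [LinearMap.singularValues_of_finrank_le _ (not_lt.1 hi)]
    exact norm_nonneg T

theorem norm_det_le_opNorm_pow_mul_norm_apply (T : E →L[𝕜] E) {x : E} (hx : ‖x‖ = 1) :
    ‖LinearMap.det (T : E →ₗ[𝕜] E)‖ ≤ ‖T‖ ^ (finrank 𝕜 E - 1) * ‖T x‖ := by
  have : Nontrivial E := ⟨⟨x, 0, by rintro rfl; simp at hx⟩⟩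
  obtain ⟨m, hm⟩ := Nat.exists_eq_add_one_of_ne_zero (finrank_pos (R := 𝕜) (M := E)).ne'
  have hlast := (T : E →ₗ[𝕜] E).singularValues_finrank_sub_one_le hx
  rw [hm, Nat.add_sub_cancel] at hlast
  rw [← LinearMap.normDet_eq_norm_det, LinearMap.normDet_eq_prod_singularValues, hm,
    Finset.prod_range_succ, Nat.add_sub_cancel]
  refine mul_le_mul ?_ hlast (LinearMap.singularValues_nonneg _ _) (by positivity)
  calc ∏ i ∈ Finset.range m, (T : E →ₗ[𝕜] E).singularValues i ≤ ∏ _i ∈ Finset.range m, ‖T‖ :=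
        Finset.prod_le_prod (fun i _ => LinearMap.singularValues_nonneg _ i)
          fun i _ => T.singularValues_le_opNorm i
    _ = ‖T‖ ^ m := by simp

end RCLike

variable {E : Type*} [NormedAddCommGroup E] [InnerProductSpace ℂ E] [FiniteDimensional ℂ E]

theorem prod_norm_sub_roots_charpoly_le (S T : E →L[ℂ] E) {μ : ℂ}
    (hμ : End.HasEigenvalue (T : E →ₗ[ℂ] E) μ) :
    ((S : E →ₗ[ℂ] E).charpoly.roots.map fun a => ‖a - μ‖).prod ≤
      (‖S‖ + ‖T‖) ^ (finrank ℂ E - 1) * ‖S - T‖ := by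
  obtain ⟨v, hv⟩ := hμ.exists_hasEigenvector
  set x := (‖v‖⁻¹ : ℂ) • v
  have hx : ‖x‖ = 1 := by simp [x, norm_smul, hv.2]
  have hTx : T x = μ • x := by
    have hTv : T v = μ • v := hv.apply_eq_smul
    simp [x, hTv, smul_comm μ]
  have hμT : ‖μ‖ ≤ ‖T‖ := by simpa [hTx, norm_smul, hx] using T.le_opNorm x
  set R := μ • ContinuousLinearMap.id ℂ E - S
  have hR : ‖R‖ ≤ ‖S‖ + ‖T‖ := by
    have := mul_le_of_le_one_right (norm_nonneg μ) (norm_id_le (𝕜 := ℂ) (E := E))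
    calc ‖R‖ ≤ ‖μ‖ * ‖ContinuousLinearMap.id ℂ E‖ + ‖S‖ :=
          (norm_sub_le _ _).trans (by rw [norm_smul])
      _ ≤ ‖S‖ + ‖T‖ := by linarith
  have hRx : ‖R x‖ = ‖(S - T) x‖ := by
    rw [← norm_neg]
    simp [R, hTx]
  calc ((S : E →ₗ[ℂ] E).charpoly.roots.map fun a => ‖a - μ‖).prod
      = ‖LinearMap.det (R : E →ₗ[ℂ] E)‖ := by
        rw [← norm_eval_eq_prod_roots (LinearMap.charpoly_monic _), LinearMap.eval_charpoly]
        rfl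
    _ ≤ ‖R‖ ^ (finrank ℂ E - 1) * ‖R x‖ := R.norm_det_le_opNorm_pow_mul_norm_apply hx
    _ ≤ (‖S‖ + ‖T‖) ^ (finrank ℂ E - 1) * ‖S - T‖ := by
        rw [hRx]
        gcongr
        simpa [hx] using (S - T).le_opNorm x

end ContinuousLinearMap

theorem Matrix.charpoly_toEuclideanLin {ι 𝕜 : Type*} [Fintype ι] [DecidableEq ι] [RCLike 𝕜]
    (M : Matrix ι ι 𝕜) : (toEuclideanLin M).charpoly = M.charpoly := by
  rw [toEuclideanLin_eq_toLin_orthonormal, charpoly_toLin]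

theorem Matrix.card_roots_charpoly {ι K : Type*} [Fintype ι] [DecidableEq ι] [Field K]
    [IsAlgClosed K] (M : Matrix ι ι K) : Multiset.card M.charpoly.roots = Fintype.card ι :=
  (splits_iff_card_roots.1 (IsAlgClosed.splits _)).trans M.charpoly_natDegree_eq_dim

theorem specNormC_sub_comm {n : ℕ} (A B : Matrix (Fin n) (Fin n) ℂ) :
    specNormC (A - B) = specNormC (B - A) := by
  rw [specNormC, specNormC, ← neg_sub, map_neg, map_neg, norm_neg]

theorem specVariation_le {n : ℕ} (A B : Matrix (Fin n) (Fin n) ℂ) :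
    specVariation A B ≤
      (specNormC A + specNormC B) ^ ((1 : ℝ) - 1 / n) * specNormC (A - B) ^ ((1 : ℝ) / n) := by
  set S := LinearMap.toContinuousLinearMap (toEuclideanLin A)
  set T := LinearMap.toContinuousLinearMap (toEuclideanLin B)
  have hST : specNormC (A - B) = ‖S - T‖ := by rw [specNormC, map_sub, map_sub]
  change _ ≤ (‖S‖ + ‖T‖) ^ _ * _
  rw [hST]
  refine Real.sSup_le ?_ (by positivity)
  rintro _ ⟨μ, hμ, rfl⟩
  have hμT : End.HasEigenvalue (toEuclideanLin B) μ := by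
    rw [End.hasEigenvalue_iff_isRoot_charpoly, charpoly_toEuclideanLin]
    exact (mem_roots'.1 hμ).2
  have hn : n ≠ 0 := by
    rintro rfl
    simp [spectrumMultiset, Matrix.charpoly] at hμ
  have hcard : Multiset.card A.charpoly.roots = n := by
    rw [A.card_roots_charpoly, Fintype.card_fin]
  obtain ⟨l, hl, hle⟩ := Multiset.exists_mem_pow_card_le_prod_map (f := fun a => ‖a - μ‖)
    (Multiset.card_pos.1 (hcard ▸ Nat.pos_of_ne_zero hn)) fun _ _ => norm_nonneg _
  have hprod : (A.charpoly.roots.map fun a => ‖a - μ‖).prod ≤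
      (‖S‖ + ‖T‖) ^ (n - 1) * ‖S - T‖ := by
    have := S.prod_norm_sub_roots_charpoly_le T hμT
    rwa [finrank_euclideanSpace_fin, LinearMap.coe_toContinuousLinearMap,
      charpoly_toEuclideanLin] at this
  rw [hcard] at hle
  calc sInf {s | ∃ lam ∈ spectrumMultiset A, s = ‖lam - μ‖} ≤ ‖l - μ‖ :=
        csInf_le ⟨0, by rintro _ ⟨_, _, rfl⟩; exact norm_nonneg _⟩ ⟨l, hl, rfl⟩
    _ ≤ _ := Real.le_rpow_mul_rpow_of_pow_le hn (norm_nonneg _) (by positivity) (norm_nonneg _)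
      (hle.trans hprod)

/-- Elsner's bound: for `𝒜, ℬ ∈ ℂ^{n×n}`,
`d_H(𝒜, ℬ) ≤ (‖𝒜‖ + ‖ℬ‖)^{1−1/n} ‖𝒜 − ℬ‖^{1/n}`. -/
theorem hausdorffSpecDist_le {n : ℕ} (A B : Matrix (Fin n) (Fin n) ℂ) :
    hausdorffSpecDist A B ≤
      (specNormC A + specNormC B) ^ ((1 : ℝ) - 1 / n) *
        specNormC (A - B) ^ ((1 : ℝ) / n) := by
  refine max_le (specVariation_le A B) ?_
  simpa only [add_comm (specNormC B), specNormC_sub_comm B A] using specVariation_le B A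
end
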